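/- Let Ω = (0,L)² with L > 0, let β ∈ ℝ² be a constant vector, let ε > 0, h > 0 and C > 0 satisfy ε ≤ h/(2C²), and let v : ℝ² → ℝ be a smooth function compactly supported in Ω satisfying the inverse inequality ‖Δv‖_{L²(Ω)} ≤ C h⁻¹ ‖∇v‖_{L²(Ω)}. Define b(v,v) = (1/h)·(ε·‖∇v‖²_{L²(Ω)} + (β·∇v, v)_{L²(Ω)}) + ‖−ε·Δv + β·∇v‖²_{L²(Ω)}. Then b(v,v) ≥ (1/2)·((ε/h)·‖∇v‖²_{L²(Ω)} + ‖β·∇v‖²_{L²(Ω)}). -/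

import Mathlib

set_option maxHeartbeats 1000000


open MeasureTheory

/-- The Laplacian of `f : ℝ² → ℝ`, as the sum of the second partial derivatives. -/
noncomputable def laplacian2 (f : EuclideanSpace ℝ (Fin 2) → ℝ)
    (x : EuclideanSpace ℝ (Fin 2)) : ℝ :=
  ∑ k, fderiv ℝ (fun y => fderiv ℝ f y (EuclideanSpace.single k 1)) x
        (EuclideanSpace.single k 1)

/-- coercivity, Theorem 3 of the paper: Let Ω = (0,L)², β ∈ ℝ²,
ε > 0, h > 0, C > 0 with ε ≤ h/(2C²), and v : ℝ² → ℝ smooth, compactly supported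
in Ω, satisfying the inverse inequality ‖Δv‖_{L²(Ω)} ≤ C h⁻¹ ‖∇v‖_{L²(Ω)}. Then
b(v,v) = (1/h)·(ε·‖∇v‖²_{L²(Ω)} + (β·∇v, v)_{L²(Ω)}) + ‖−ε·Δv + β·∇v‖²_{L²(Ω)}
satisfies b(v,v) ≥ (1/2)·((ε/h)·‖∇v‖²_{L²(Ω)} + ‖β·∇v‖²_{L²(Ω)}). -/
theorem stmt10 (L ε h C : ℝ) (hL : 0 < L) (hε : 0 < ε) (hh : 0 < h) (hC : 0 < C)
    (hεh : ε ≤ h / (2 * C ^ 2))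
    (β : EuclideanSpace ℝ (Fin 2))
    (Ω : Set (EuclideanSpace ℝ (Fin 2)))
    (hΩ : Ω = {x : EuclideanSpace ℝ (Fin 2) | ∀ i, x i ∈ Set.Ioo 0 L})
    (v : EuclideanSpace ℝ (Fin 2) → ℝ)
    (hv : ContDiff ℝ (⊤ : ℕ∞) v) (hsupp : HasCompactSupport v)
    (hsub : tsupport v ⊆ Ω)
    (hinv : Real.sqrt (∫ x in Ω, (laplacian2 v x) ^ 2)
      ≤ C * h⁻¹ * Real.sqrt (∫ x in Ω, ‖gradient v x‖ ^ 2)) :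
    (1 / h) * (ε * ∫ x in Ω, ‖gradient v x‖ ^ 2 + ∫ x in Ω, fderiv ℝ v x β * v x)
      + ∫ x in Ω, (-(ε * laplacian2 v x) + fderiv ℝ v x β) ^ 2
    ≥ (1 / 2) * ((ε / h) * (∫ x in Ω, ‖gradient v x‖ ^ 2)
        + ∫ x in Ω, (fderiv ℝ v x β) ^ 2) := by
  have hvd : Differentiable ℝ v := hv.differentiable (by simp)
  -- vanishing off the support
  have hfd0 : ∀ x, x ∉ tsupport v → fderiv ℝ v x = 0 := by
    intro x hx
    by_contra hne
    exact hx (support_fderiv_subset ℝ (f := v) hne)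
  have hv0 : ∀ x, x ∉ tsupport v → v x = 0 := fun x hx =>
    image_eq_zero_of_notMem_tsupport hx
  have hlap0 : ∀ x, x ∉ tsupport v → laplacian2 v x = 0 := by
    intro x hx
    have : ∀ k : Fin 2,
        fderiv ℝ (fun y => fderiv ℝ v y (EuclideanSpace.single k 1)) x = 0 := by
      intro k
      by_contra hne
      have h1 := support_fderiv_subset ℝ
        (f := fun y => fderiv ℝ v y (EuclideanSpace.single k 1)) hne
      have h2 : tsupport (fun y => fderiv ℝ v y (EuclideanSpace.single k 1))
          ⊆ tsupport v := by
        apply closure_minimal _ (isClosed_tsupport v)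
        intro y hy
        by_contra hyn
        exact hy (by simp [hfd0 y hyn])
      exact hx (h2 h1)
    simp [laplacian2, this]
  have hgrad0 : ∀ x, x ∉ tsupport v → gradient v x = 0 := by
    intro x hx
    rw [gradient, hfd0 x hx, map_zero]
  -- continuity facts
  have hcfd : Continuous (fderiv ℝ v) := (hv.fderiv_right (m := (⊤ : ℕ∞)) (by simp)).continuous
  have hcβ : Continuous (fun x => fderiv ℝ v x β) := hcfd.clm_apply continuous_const
  have hcv : Continuous v := hv.continuous
  have hcgrad : Continuous (gradient v) :=
    (InnerProductSpace.toDual ℝ _).symm.continuous.comp hcfd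
  have hclap : Continuous (laplacian2 v) := by
    apply continuous_finset_sum
    intro k _
    have hgk : ContDiff ℝ (⊤ : ℕ∞) (fun y => fderiv ℝ v y (EuclideanSpace.single k 1)) :=
      ((ContinuousLinearMap.apply ℝ ℝ (EuclideanSpace.single k (1:ℝ))).contDiff).comp
        (hv.fderiv_right (m := (⊤ : ℕ∞)) (by simp))
    exact ((hgk.fderiv_right (m := (⊤ : ℕ∞)) (by simp)).continuous).clm_apply continuous_const
  -- integrability helper
  have key : ∀ f : EuclideanSpace ℝ (Fin 2) → ℝ, Continuous f →
      (∀ x, x ∉ tsupport v → f x = 0) → Integrable f := by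
    intro f hf h0
    exact hf.integrable_of_hasCompactSupport (HasCompactSupport.intro hsupp h0)
  set A := ∫ x in Ω, ‖gradient v x‖ ^ 2 with hAdef
  set D := ∫ x in Ω, (laplacian2 v x) ^ 2 with hDdef
  set B2 := ∫ x in Ω, (fderiv ℝ v x β) ^ 2 with hB2def
  set E2 := ∫ x in Ω, (-(ε * laplacian2 v x) + fderiv ℝ v x β) ^ 2 with hE2def
  have hA0 : 0 ≤ A := integral_nonneg fun x => sq_nonneg _
  have hD0 : 0 ≤ D := integral_nonneg fun x => sq_nonneg _
  have hB0 : 0 ≤ B2 := integral_nonneg fun x => sq_nonneg _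
  -- the inverse inequality, squared
  have hDle : D ≤ C ^ 2 * h⁻¹ ^ 2 * A := by
    have h1 : Real.sqrt D ^ 2 ≤ (C * h⁻¹ * Real.sqrt A) ^ 2 := by
      apply pow_le_pow_left₀ (Real.sqrt_nonneg _) hinv
    rw [Real.sq_sqrt hD0] at h1
    calc D ≤ (C * h⁻¹ * Real.sqrt A) ^ 2 := h1
      _ = C ^ 2 * h⁻¹ ^ 2 * Real.sqrt A ^ 2 := by ring
      _ = C ^ 2 * h⁻¹ ^ 2 * A := by rw [Real.sq_sqrt hA0]
  -- the skew term vanishes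
  have hI : ∫ x in Ω, fderiv ℝ v x β * v x = 0 := by
    rw [setIntegral_eq_integral_of_forall_compl_eq_zero
      (fun x hx => by
        have : x ∉ tsupport v := fun hmem => hx (hsub hmem)
        simp [hv0 x this])]
    have hint : Integrable (fun x => fderiv ℝ v x β * v x) :=
      key _ (hcβ.mul hcv) (fun x hx => by simp [hv0 x hx])
    have hint' : Integrable (fun x => v x * fderiv ℝ v x β) := by
      simpa [mul_comm] using hint
    have hvv : Integrable (fun x => v x * v x) :=
      key _ (hcv.mul hcv) (fun x hx => by simp [hv0 x hx])
    have := integral_mul_fderiv_eq_neg_fderiv_mul_of_integrable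
      (μ := (volume : Measure (EuclideanSpace ℝ (Fin 2)))) (f := v) (g := v) (v := β)
      hint hint' hvv (fun x _ => hvd x) (fun x _ => hvd x)
    have heq : ∫ x, v x * fderiv ℝ v x β = ∫ x, fderiv ℝ v x β * v x := by
      congr 1; funext x; ring
    rw [heq] at this
    linarith
  -- Young's inequality pointwise, integrated
  have hE : E2 + ε ^ 2 * D - (1/2) * B2 ≥ 0 := by
    have hintE : Integrable (fun x => (-(ε * laplacian2 v x) + fderiv ℝ v x β) ^ 2) :=
      key _ (((continuous_const.mul hclap).neg.add hcβ).pow 2)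
        (fun x hx => by simp [hlap0 x hx, hfd0 x hx])
    have hintD : Integrable (fun x => ε ^ 2 * (laplacian2 v x) ^ 2) :=
      key _ (continuous_const.mul (hclap.pow 2)) (fun x hx => by simp [hlap0 x hx])
    have hintB : Integrable (fun x => (1/2) * (fderiv ℝ v x β) ^ 2) :=
      key _ (continuous_const.mul (hcβ.pow 2)) (fun x hx => by simp [hfd0 x hx])
    have hsum : ∫ x in Ω, ((-(ε * laplacian2 v x) + fderiv ℝ v x β) ^ 2
        + ε ^ 2 * (laplacian2 v x) ^ 2 - (1/2) * (fderiv ℝ v x β) ^ 2)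
        = E2 + ε ^ 2 * D - (1/2) * B2 := by
      have hintED : Integrable (fun x => (-(ε * laplacian2 v x) + fderiv ℝ v x β) ^ 2
          + ε ^ 2 * (laplacian2 v x) ^ 2) := hintE.add hintD
      rw [integral_sub hintED.integrableOn hintB.integrableOn,
        integral_add hintE.integrableOn hintD.integrableOn,
        integral_const_mul, integral_const_mul]
    rw [← hsum]
    apply integral_nonneg
    intro x
    simp only [Pi.zero_apply]
    nlinarith [sq_nonneg (-(ε * laplacian2 v x) + (1/2) * fderiv ℝ v x β)]
  -- combine
  have h2 : ε ^ 2 * (C ^ 2 * h⁻¹ ^ 2) ≤ ε / (2 * h) := by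
    have hk : ε * (2 * C ^ 2) ≤ h := (le_div_iff₀ (by positivity)).mp hεh
    rw [le_div_iff₀ (by positivity)]
    have hrw : ε ^ 2 * (C ^ 2 * h⁻¹ ^ 2) * (2 * h) = (ε * (2 * C ^ 2)) * (ε * h * h⁻¹ ^ 2) := by
      ring
    rw [hrw]
    calc (ε * (2 * C ^ 2)) * (ε * h * h⁻¹ ^ 2) ≤ h * (ε * h * h⁻¹ ^ 2) :=
          mul_le_mul_of_nonneg_right hk (by positivity)
      _ = ε := by field_simp
  have h1 : ε ^ 2 * D ≤ ε ^ 2 * (C ^ 2 * h⁻¹ ^ 2) * A := by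
    calc ε ^ 2 * D ≤ ε ^ 2 * (C ^ 2 * h⁻¹ ^ 2 * A) :=
          mul_le_mul_of_nonneg_left hDle (by positivity)
      _ = ε ^ 2 * (C ^ 2 * h⁻¹ ^ 2) * A := by ring
  have h3 : ε ^ 2 * (C ^ 2 * h⁻¹ ^ 2) * A ≤ (ε / (2 * h)) * A :=
    mul_le_mul_of_nonneg_right h2 hA0
  rw [hI]
  simp only [add_zero]
  rw [← hAdef]
  have e1 : (ε/h) * A = (1/h) * (ε * A) := by ring
  have e2 : ε / (2*h) * A = (1/2) * ((ε/h) * A) := by ring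
  linarith [hE, h1, h3, e1, e2]
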